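/- arXiv:1301.1210 — 3 statements merged into one kernel-verified Lean document; each statement's English description precedes it below -/
import Mathlib

section
/- Let V be a nonnegative integrable function on the circle S¹ (with uniform probability measure dσ), let μ = ∫_{S¹} V dσ, and let λ₁(−Δ−V) = inf{∫|u'|²dσ − ∫V|u|²dσ : u ∈ H¹(S¹), ∫|u|²dσ = 1}. Then −μ − π²μ² ≤ λ₁(−Δ−V) ≤ 0, i.e. |λ₁(−Δ−V)| ≤ μ + π²μ². -/
open MeasureTheory Real


lemma aux_per_int (f : ℝ → ℝ) (hper : ∀ x, f (x + 2*π) = f x)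
    (h : IntervalIntegrable f volume 0 (2*π)) (a b : ℝ) :
    IntervalIntegrable f volume a b := by
  have hp : Function.Periodic f (2*π) := hper
  have key : ∀ n : ℤ, IntervalIntegrable f volume (2*π*n) (2*π*(n+1)) := by
    intro n
    have := h.comp_add_right (2*π*(-n))
    have heq : (fun x => f (x + 2*π*(-n))) = f := by
      funext x
      simpa [mul_comm] using (hp.int_mul (-n)) x
    rw [heq] at this
    have e1 : (0:ℝ) - 2*π*(-n) = 2*π*n := by push_cast; ring
    have e2 : 2*π - 2*π*(-n) = 2*π*(n+1) := by push_cast; ring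
    rwa [e1, e2] at this
  have chain : ∀ n : ℕ, IntervalIntegrable f volume (-(2*π*n)) (2*π*n) := by
    intro n
    induction n with
    | zero => simp
    | succ m ih =>
        have h1 := key (-(m+1))
        have h2 := key m
        have e1 : (2*π*((-(m+1):ℤ):ℝ)) = -(2*π*(m+1:ℕ)) := by push_cast; ring
        have e2 : (2*π*(((-(m+1):ℤ):ℝ)+1)) = -(2*π*(m:ℕ)) := by push_cast; ring
        have e3 : (2*π*((m:ℤ):ℝ)) = 2*π*(m:ℕ) := by push_cast; ring
        have e4 : (2*π*(((m:ℤ):ℝ)+1)) = 2*π*(m+1:ℕ) := by push_cast; ring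
        rw [e1, e2] at h1
        rw [e3, e4] at h2
        exact ((h1.trans ih).trans h2)
  obtain ⟨n, hn⟩ := exists_nat_ge ((max |a| |b|) / (2*π))
  have hπ : (0:ℝ) < 2*π := by positivity
  have hbound : max |a| |b| ≤ 2*π*n := by
    rw [div_le_iff₀ hπ] at hn; nlinarith [hn]
  refine (chain n).mono_set ?_
  have ha1 := le_trans (le_max_left |a| |b|) hbound
  have hb1 := le_trans (le_max_right |a| |b|) hbound
  have ha2 := abs_le.mp ha1
  have hb2 := abs_le.mp hb1
  rw [Set.uIcc_subset_uIcc_iff_le]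
  exact ⟨le_trans (min_le_left _ _) (le_min ha2.1 hb2.1),
         le_trans (max_le ha2.2 hb2.2) (le_max_right _ _)⟩


lemma aux_sq (g : ℝ → ℝ) (hm : Measurable g)
    (hgi : ∀ a b, IntervalIntegrable g volume a b) (y x : ℝ) (hyx : y ≤ x) :
    (∫ t in Set.Ioc y x, g t)^2 = 2 * ∫ t in Set.Ioc y x, (g t * ∫ s in y..t, g s) := by
  set A := Set.Ioc y x with hA
  have hint : IntegrableOn g A := (intervalIntegrable_iff_integrableOn_Ioc_of_le hyx).1 (hgi y x)
  set H : ℝ → ℝ := fun t => ∫ s in y..t, g s with hH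
  have hHcont : Continuous H := intervalIntegral.continuous_primitive hgi y
  set C : ℝ := ∫ t in A, g t with hC
  set f : ℝ → ℝ → ℝ := fun t s => g t * (if s ≤ t then g s else 0) with hf
  set ν := volume.restrict A with hν
  -- integrability of uncurry f on product
  have hgg : Integrable (fun p : ℝ × ℝ => g p.1 * g p.2) (ν.prod ν) := hint.mul_prod hint
  have hmeasf : AEStronglyMeasurable (Function.uncurry f) (ν.prod ν) := by
    have : Measurable (Function.uncurry f) := by
      apply Measurable.mul (hm.comp measurable_fst)
      exact Measurable.ite (measurableSet_le measurable_snd measurable_fst)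
        (hm.comp measurable_snd) measurable_const
    exact this.aestronglyMeasurable
  have hintf : Integrable (Function.uncurry f) (ν.prod ν) := by
    refine Integrable.mono' hgg.norm hmeasf (Filter.Eventually.of_forall ?_)
    rintro ⟨t, s⟩
    simp only [Function.uncurry, hf, norm_norm]
    split_ifs with h
    · simp [abs_mul]
    · simp only [mul_zero, norm_zero, norm_mul]
      positivity
  -- Fubini swap
  have hswap : ∫ t, (∫ s, f t s ∂ν) ∂ν = ∫ s, (∫ t, f t s ∂ν) ∂ν :=
    integral_integral_swap hintf
  -- identify LHS of swap
  have hL : ∫ t, (∫ s, f t s ∂ν) ∂ν = ∫ t in A, g t * H t := by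
    refine setIntegral_congr_fun measurableSet_Ioc (fun t ht => ?_)
    have h1 : ∀ s, f t s = (Set.Iic t).indicator g s * g t := by
      intro s; simp only [hf, Set.indicator, Set.mem_Iic]; split_ifs <;> ring
    calc ∫ s, f t s ∂ν = ∫ s in A, (Set.Iic t).indicator g s * g t := by
          rw [hν]; exact setIntegral_congr_fun measurableSet_Ioc (fun s _ => h1 s)
      _ = (∫ s in A, (Set.Iic t).indicator g s) * g t := by rw [integral_mul_const]
      _ = (∫ s in A ∩ Set.Iic t, g s) * g t := by rw [setIntegral_indicator measurableSet_Iic]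
      _ = (∫ s in Set.Ioc y t, g s) * g t := by
          rw [hA, Set.Ioc_inter_Iic, min_eq_right ht.2]
      _ = g t * H t := by
          show _ = g t * ∫ s in y..t, g s
          rw [intervalIntegral.integral_of_le ht.1.le]; ring
  -- identify RHS of swap
  have hR : ∫ s, (∫ t, f t s ∂ν) ∂ν = ∫ s in A, g s * (C - H s) := by
    refine setIntegral_congr_fun measurableSet_Ioc (fun s hs => ?_)
    have h1 : ∀ t, f t s = (Set.Ici s).indicator g t * g s := by
      intro t; simp only [hf, Set.indicator, Set.mem_Ici]; split_ifs <;> ring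
    have hAIci : A ∩ Set.Ici s = Set.Icc s x := by
      ext t
      simp only [hA, Set.mem_inter_iff, Set.mem_Ioc, Set.mem_Ici, Set.mem_Icc]
      exact ⟨fun ⟨⟨_, h2⟩, h3⟩ => ⟨h3, h2⟩, fun ⟨h3, h2⟩ => ⟨⟨lt_of_lt_of_le hs.1 h3, h2⟩, h3⟩⟩
    have hsplit : C = H s + ∫ t in Set.Ioc s x, g t := by
      show (∫ t in A, g t) = (∫ u in y..s, g u) + ∫ t in Set.Ioc s x, g t
      rw [intervalIntegral.integral_of_le hs.1.le, hA,
        ← Set.Ioc_union_Ioc_eq_Ioc hs.1.le hs.2,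
        setIntegral_union (Set.Ioc_disjoint_Ioc_of_le le_rfl) measurableSet_Ioc
          (hint.mono_set (by rw [hA]; exact Set.Ioc_subset_Ioc le_rfl hs.2))
          (hint.mono_set (by rw [hA]; exact Set.Ioc_subset_Ioc hs.1.le le_rfl))]
    calc ∫ t, f t s ∂ν = ∫ t in A, (Set.Ici s).indicator g t * g s := by
          rw [hν]; exact setIntegral_congr_fun measurableSet_Ioc (fun t _ => h1 t)
      _ = (∫ t in A ∩ Set.Ici s, g t) * g s := by
          rw [integral_mul_const, setIntegral_indicator measurableSet_Ici]
      _ = (∫ t in Set.Icc s x, g t) * g s := by rw [hAIci]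
      _ = (∫ t in Set.Ioc s x, g t) * g s := by rw [integral_Icc_eq_integral_Ioc]
      _ = g s * (C - H s) := by rw [hsplit]; ring
  -- integrability of g * H on A
  obtain ⟨M, hM⟩ := (isCompact_Icc (a := y) (b := x)).exists_bound_of_continuousOn
    hHcont.continuousOn
  have hgH : IntegrableOn (fun t => g t * H t) A := by
    refine Integrable.mono' (hint.norm.mul_const M) ((hm.mul (hHcont.measurable)).aestronglyMeasurable) ?_
    rw [ae_restrict_iff' measurableSet_Ioc]
    refine Filter.Eventually.of_forall (fun t ht => ?_)
    have := hM t (Set.mem_Icc_of_Ioc ht)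
    simp only [norm_mul, Real.norm_eq_abs]
    exact mul_le_mul_of_nonneg_left this (abs_nonneg _)
  -- put together
  have hsplit2 : ∫ s in A, g s * (C - H s) = C * C - ∫ s in A, g s * H s := by
    have h1 : ∀ s, g s * (C - H s) = g s * C - g s * H s := fun s => by ring
    simp_rw [h1]
    rw [integral_sub (hint.mul_const C) hgH, integral_mul_const]
  have hfinal : ∫ t in A, g t * H t = C * C - ∫ s in A, g s * H s :=
    hL.symm.trans (hswap.trans (hR.trans hsplit2))
  show C^2 = 2 * ∫ t in A, g t * H t
  have h2 : (∫ t in A, g t * H t) = (∫ s in A, g s * H s) := rfl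
  rw [h2] at hfinal
  nlinarith [hfinal]

lemma aux_ftc_sq (u g : ℝ → ℝ) (hm : Measurable g)
    (hgi : ∀ a b, IntervalIntegrable g volume a b)
    (hu : ∀ x, u x = u 0 + ∫ t in (0:ℝ)..x, g t)
    (y x : ℝ) (hyx : y ≤ x) :
    u x ^ 2 - u y ^ 2 = ∫ t in Set.Ioc y x, 2 * u t * g t := by
  have hud : ∀ t, u t = u y + ∫ s in y..t, g s := by
    intro t
    have hadd := intervalIntegral.integral_add_adjacent_intervals (hgi 0 y) (hgi y t)
    rw [hu t, hu y]
    linarith [hadd]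
  have hint : IntegrableOn g (Set.Ioc y x) :=
    (intervalIntegrable_iff_integrableOn_Ioc_of_le hyx).1 (hgi y x)
  have hHcont : Continuous (fun t => ∫ s in y..t, g s) :=
    intervalIntegral.continuous_primitive hgi y
  obtain ⟨M, hM⟩ := (isCompact_Icc (a := y) (b := x)).exists_bound_of_continuousOn
    hHcont.continuousOn
  have hgH : IntegrableOn (fun t => g t * ∫ s in y..t, g s) (Set.Ioc y x) := by
    refine Integrable.mono' (hint.norm.mul_const M)
      ((hm.mul hHcont.measurable).aestronglyMeasurable) ?_
    rw [ae_restrict_iff' measurableSet_Ioc]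
    refine Filter.Eventually.of_forall (fun t ht => ?_)
    have := hM t (Set.mem_Icc_of_Ioc ht)
    simp only [norm_mul, Real.norm_eq_abs] at this ⊢
    exact mul_le_mul_of_nonneg_left this (abs_nonneg _)
  have key := aux_sq g hm hgi y x hyx
  have hC : (∫ s in y..x, g s) = ∫ t in Set.Ioc y x, g t :=
    intervalIntegral.integral_of_le hyx
  calc u x ^ 2 - u y ^ 2
      = 2 * u y * (∫ t in Set.Ioc y x, g t) + (∫ t in Set.Ioc y x, g t)^2 := by
        rw [hud x, hC]; ring
    _ = ∫ t in Set.Ioc y x, (2 * u y * g t + 2 * (g t * ∫ s in y..t, g s)) := by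
        rw [integral_add (hint.const_mul (2 * u y)) (hgH.const_mul 2),
          integral_const_mul, integral_const_mul, key]
    _ = ∫ t in Set.Ioc y x, 2 * u t * g t := by
        refine setIntegral_congr_fun measurableSet_Ioc (fun t _ => ?_)
        rw [hud t]; ring

set_option maxHeartbeats 1000000 in
/-- Let `V ≥ 0` be integrable on the circle `S¹` (of circumference `2π`, with uniform
probability measure `dσ`), `μ = ∫ V dσ`, and let `λ₁(−Δ−V)` be the infimum of the
quadratic form `∫ |u'|² dσ − ∫ V |u|² dσ` over `H¹(S¹)` functions with `∫ |u|² dσ = 1`.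
Then `−μ − π²μ² ≤ λ₁(−Δ−V) ≤ 0`. -/
theorem circle_eigenvalue_bound (V : ℝ → ℝ) (hVnn : ∀ x, 0 ≤ V x)
    (hVper : ∀ x, V (x + 2*π) = V x)
    (hVint : IntegrableOn V (Set.Ioc 0 (2*π)))
    (μ : ℝ) (hμ : μ = (1/(2*π)) * ∫ y in Set.Ioc 0 (2*π), V y)
    (lam : ℝ)
    (hlam : lam = sInf {r : ℝ | ∃ u g : ℝ → ℝ, Measurable g ∧
        (∀ x : ℝ, u x = u 0 + ∫ t in (0:ℝ)..x, g t) ∧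
        (∀ x : ℝ, u (x + 2*π) = u x) ∧ (∀ x : ℝ, g (x + 2*π) = g x) ∧
        IntegrableOn (fun y => g y ^ 2) (Set.Ioc 0 (2*π)) ∧
        IntegrableOn (fun y => V y * u y ^ 2) (Set.Ioc 0 (2*π)) ∧
        (1/(2*π)) * ∫ y in Set.Ioc 0 (2*π), u y ^ 2 = 1 ∧
        r = (1/(2*π)) * ∫ y in Set.Ioc 0 (2*π), (g y ^ 2 - V y * u y ^ 2)}) :
    -μ - π^2 * μ^2 ≤ lam ∧ lam ≤ 0 := by
  have hπ : (0:ℝ) < π := pi_pos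
  have h2π : (0:ℝ) < 2*π := by positivity
  have hEvol : volume (Set.Ioc (0:ℝ) (2*π)) < ⊤ := by
    rw [Real.volume_Ioc]; exact ENNReal.ofReal_lt_top
  have hμnn : 0 ≤ μ := by
    rw [hμ]
    have h1 : 0 ≤ ∫ y in Set.Ioc (0:ℝ) (2*π), V y :=
      setIntegral_nonneg measurableSet_Ioc (fun y _ => hVnn y)
    positivity
  -- the witness u = 1, g = 0
  have hmem : (-μ) ∈ {r : ℝ | ∃ u g : ℝ → ℝ, Measurable g ∧
        (∀ x : ℝ, u x = u 0 + ∫ t in (0:ℝ)..x, g t) ∧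
        (∀ x : ℝ, u (x + 2*π) = u x) ∧ (∀ x : ℝ, g (x + 2*π) = g x) ∧
        IntegrableOn (fun y => g y ^ 2) (Set.Ioc 0 (2*π)) ∧
        IntegrableOn (fun y => V y * u y ^ 2) (Set.Ioc 0 (2*π)) ∧
        (1/(2*π)) * ∫ y in Set.Ioc 0 (2*π), u y ^ 2 = 1 ∧
        r = (1/(2*π)) * ∫ y in Set.Ioc 0 (2*π), (g y ^ 2 - V y * u y ^ 2)} := by
    refine ⟨fun _ => (1:ℝ), fun _ => (0:ℝ), measurable_const, by simp, fun x => rfl,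
      fun x => rfl, ?_, by simpa using hVint, ?_, ?_⟩
    · simpa using (integrableOn_const (C := (0:ℝ))).2 (Or.inl rfl)
    · have h1 : ∫ y in Set.Ioc (0:ℝ) (2*π), (1:ℝ)^2 = 2*π := by
        simp [Real.volume_Ioc, ENNReal.toReal_ofReal h2π.le, hπ.le]
      rw [h1]; field_simp
    · have h1 : ∀ y : ℝ, (0:ℝ)^2 - V y * (1:ℝ)^2 = -(V y) := fun y => by ring
      simp_rw [h1]
      rw [integral_neg, hμ]; ring
  -- lower bound for every element
  have hlb : ∀ r ∈ {r : ℝ | ∃ u g : ℝ → ℝ, Measurable g ∧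
        (∀ x : ℝ, u x = u 0 + ∫ t in (0:ℝ)..x, g t) ∧
        (∀ x : ℝ, u (x + 2*π) = u x) ∧ (∀ x : ℝ, g (x + 2*π) = g x) ∧
        IntegrableOn (fun y => g y ^ 2) (Set.Ioc 0 (2*π)) ∧
        IntegrableOn (fun y => V y * u y ^ 2) (Set.Ioc 0 (2*π)) ∧
        (1/(2*π)) * ∫ y in Set.Ioc 0 (2*π), u y ^ 2 = 1 ∧
        r = (1/(2*π)) * ∫ y in Set.Ioc 0 (2*π), (g y ^ 2 - V y * u y ^ 2)},
      -μ - π^2 * μ^2 ≤ r := by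
    rintro r ⟨u, g, hgm, hu, huper, hgper, hg2, hVu2, hnorm, hr⟩
    -- g is integrable on the period
    have hconst1 : IntegrableOn (fun _ : ℝ => (1:ℝ)) (Set.Ioc 0 (2*π)) volume :=
      integrableOn_const hEvol.ne
    have hgabs : IntegrableOn g (Set.Ioc (0:ℝ) (2*π)) := by
      refine Integrable.mono' (hconst1.add hg2)
        hgm.aestronglyMeasurable (Filter.Eventually.of_forall (fun t => ?_))
      have h1 : |g t| ≤ 1 + g t ^ 2 := by nlinarith [sq_nonneg (|g t| - 1), sq_abs (g t)]
      simpa using h1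
    have hgi : ∀ a b, IntervalIntegrable g volume a b :=
      aux_per_int g hgper ((intervalIntegrable_iff_integrableOn_Ioc_of_le h2π.le).2 hgabs)
    have hucont : Continuous u := by
      have h1 : u = fun x => u 0 + ∫ t in (0:ℝ)..x, g t := funext hu
      rw [h1]
      exact continuous_const.add (intervalIntegral.continuous_primitive hgi 0)
    have hu2int : IntegrableOn (fun t => u t ^ 2) (Set.Ioc (0:ℝ) (2*π)) :=
      (hucont.pow 2).integrableOn_Ioc
    have hUnorm : ∫ t in Set.Ioc (0:ℝ) (2*π), u t ^ 2 = 2*π := by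
      have h1 := hnorm
      field_simp at h1
      linarith
    set I : ℝ := ∫ t in Set.Ioc (0:ℝ) (2*π), |u t * g t| with hI
    have hIint : IntegrableOn (fun t => |u t * g t|) (Set.Ioc (0:ℝ) (2*π)) := by
      refine Integrable.mono' ((hu2int.add hg2).div_const 2)
        ((hucont.measurable.mul hgm).abs.aestronglyMeasurable)
        (Filter.Eventually.of_forall (fun t => ?_))
      have h1 : |u t * g t| ≤ (u t ^ 2 + g t ^ 2)/2 := by
        nlinarith [sq_nonneg (|u t| - |g t|), sq_abs (u t), sq_abs (g t), abs_mul (u t) (g t),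
          abs_nonneg (u t * g t)]
      simpa using h1
    have hInn : 0 ≤ I := setIntegral_nonneg measurableSet_Ioc (fun t _ => abs_nonneg _)
    set G2 : ℝ := ∫ t in Set.Ioc (0:ℝ) (2*π), g t ^ 2 with hG2
    have hG2nn : 0 ≤ G2 := setIntegral_nonneg measurableSet_Ioc (fun t _ => sq_nonneg _)
    -- AM-GM bound on I
    have hIbound : ∀ a : ℝ, 0 < a → I ≤ π*a + G2/(2*a) := by
      intro a ha
      have hmono : I ≤ ∫ t in Set.Ioc (0:ℝ) (2*π), (a * u t ^ 2 + g t ^ 2 / a)/2 := by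
        refine setIntegral_mono_on hIint
          (((hu2int.const_mul a).add (hg2.div_const a)).div_const 2)
          measurableSet_Ioc (fun t _ => ?_)
        have hkey2 : 2*a*|u t * g t| ≤ a^2 * u t ^ 2 + g t ^ 2 := by
          rw [abs_mul]
          nlinarith [sq_nonneg (a * |u t| - |g t|), sq_abs (u t), sq_abs (g t)]
        have h3 : (a * u t ^ 2 + g t ^ 2 / a)/2 = (a^2 * u t ^ 2 + g t ^ 2)/(2*a) := by
          field_simp
        rw [h3, le_div_iff₀ (by positivity : (0:ℝ) < 2*a)]
        linarith [hkey2]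
      have hcalc : ∫ t in Set.Ioc (0:ℝ) (2*π), (a * u t ^ 2 + g t ^ 2 / a)/2
          = (a * (2*π) + G2/a)/2 := by
        rw [integral_div, integral_add (hu2int.const_mul a) (hg2.div_const a),
          integral_const_mul, integral_div, hUnorm]
      rw [hcalc] at hmono
      calc I ≤ (a * (2*π) + G2/a)/2 := hmono
        _ = π*a + G2/(2*a) := by field_simp
    -- a point where u^2 ≤ 1
    obtain ⟨y₀, hy₀Icc, hy₀min⟩ := isCompact_Icc.exists_isMinOn
      (Set.nonempty_Icc.2 h2π.le) ((hucont.pow 2).continuousOn (s := Set.Icc 0 (2*π)))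
    have hy₀1 : u y₀ ^ 2 ≤ 1 := by
      have hconst : ∫ t in Set.Ioc (0:ℝ) (2*π), u y₀ ^ 2 = 2*π * u y₀ ^ 2 := by
        rw [setIntegral_const, measureReal_def, Real.volume_Ioc, smul_eq_mul,
          ENNReal.toReal_ofReal (by linarith : (0:ℝ) ≤ 2*π - 0)]
        ring
      have hge : ∫ t in Set.Ioc (0:ℝ) (2*π), u y₀ ^ 2
          ≤ ∫ t in Set.Ioc (0:ℝ) (2*π), u t ^ 2 := by
        refine setIntegral_mono_on (integrableOn_const hEvol.ne) hu2int
          measurableSet_Ioc (fun t ht => ?_)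
        exact hy₀min (Set.mem_Icc_of_Ioc ht)
      rw [hconst, hUnorm] at hge
      nlinarith
    -- integrability of 2|ug| on intervals
    have habs_int : ∀ a b : ℝ, IntegrableOn (fun t => 2*|u t * g t|) (Set.Ioc a b) := by
      intro a b
      rcases le_or_gt a b with hab | hab
      · have h1 : IntervalIntegrable (fun t => (2*|u t|) * |g t|) volume a b :=
          (hgi a b).abs.continuousOn_mul ((continuous_const.mul hucont.abs).continuousOn)
        have h2 := (intervalIntegrable_iff_integrableOn_Ioc_of_le hab).1 h1
        have h3 : (fun t => (2*|u t|) * |g t|) = (fun t => 2*|u t * g t|) := by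
          funext t; rw [abs_mul]; ring
        rwa [h3] at h2
      · rw [Set.Ioc_eq_empty (not_lt.2 hab.le)]
        exact integrableOn_empty
    have hug_int : ∀ a b : ℝ, a ≤ b →
        IntegrableOn (fun t => 2 * u t * g t) (Set.Ioc a b) := by
      intro a b hab
      have h1 : IntervalIntegrable (fun t => (2 * u t) * g t) volume a b :=
        (hgi a b).continuousOn_mul ((continuous_const.mul hucont).continuousOn)
      have h2 := (intervalIntegrable_iff_integrableOn_Ioc_of_le hab).1 h1
      have h3 : (fun t => (2 * u t) * g t) = (fun t => 2 * u t * g t) := by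
        funext t; ring
      rwa [h3] at h2
    -- two-path bound
    have hkey : ∀ p q : ℝ, p ≤ q → q ≤ p + 2*π → u q ^ 2 ≤ u p ^ 2 + I := by
      intro p q hpq hq2
      have h1 := aux_ftc_sq u g hgm hgi hu p q hpq
      have h2 := aux_ftc_sq u g hgm hgi hu q (p + 2*π) hq2
      rw [huper p] at h2
      have e1 : ∫ t in Set.Ioc p q, 2 * u t * g t
          ≤ ∫ t in Set.Ioc p q, 2 * |u t * g t| := by
        refine setIntegral_mono_on (hug_int p q hpq) (habs_int p q)
          measurableSet_Ioc (fun t _ => ?_)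
        have := le_abs_self (u t * g t)
        calc 2 * u t * g t = 2 * (u t * g t) := by ring
          _ ≤ 2 * |u t * g t| := by linarith
      have e2 : -(∫ t in Set.Ioc q (p + 2*π), 2 * u t * g t)
          ≤ ∫ t in Set.Ioc q (p + 2*π), 2 * |u t * g t| := by
        rw [← integral_neg]
        refine setIntegral_mono_on (hug_int q (p+2*π) hq2).neg (habs_int q (p+2*π))
          measurableSet_Ioc (fun t _ => ?_)
        have := neg_abs_le (u t * g t)
        calc -(2 * u t * g t) = 2 * (-(u t * g t)) := by ring
          _ ≤ 2 * |u t * g t| := by linarith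
      have e3 : (∫ t in Set.Ioc p q, 2 * |u t * g t|)
            + (∫ t in Set.Ioc q (p + 2*π), 2 * |u t * g t|)
          = ∫ t in Set.Ioc p (p + 2*π), 2 * |u t * g t| := by
        rw [← Set.Ioc_union_Ioc_eq_Ioc hpq hq2,
          setIntegral_union (Set.Ioc_disjoint_Ioc_of_le le_rfl) measurableSet_Ioc
            (habs_int p q) (habs_int q (p+2*π))]
      have e4 : ∫ t in Set.Ioc p (p + 2*π), 2 * |u t * g t| = 2 * I := by
        have hper2 : Function.Periodic (fun t => 2 * |u t * g t|) (2*π) := by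
          intro t; simp only [huper, hgper]
        have h5 := hper2.intervalIntegral_add_eq p 0
        rw [zero_add] at h5
        have h6 : ∫ t in Set.Ioc p (p + 2*π), 2 * |u t * g t|
            = ∫ t in p..(p + 2*π), 2 * |u t * g t| :=
          (intervalIntegral.integral_of_le (by linarith)).symm
        have h7 : ∫ t in (0:ℝ)..(2*π), 2 * |u t * g t|
            = ∫ t in Set.Ioc (0:ℝ) (2*π), 2 * |u t * g t| :=
          intervalIntegral.integral_of_le h2π.le
        rw [h6, h5, h7, integral_const_mul]
      nlinarith [e1, e2, e3, e4, h1, h2]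
    -- sup bound on u^2 over the period
    have hsup : ∀ t ∈ Set.Ioc (0:ℝ) (2*π), u t ^ 2 ≤ 1 + I := by
      intro t ht
      rcases le_total y₀ t with h | h
      · have := hkey y₀ t h (by linarith [ht.2, hy₀Icc.1])
        linarith
      · have := hkey y₀ (t + 2*π) (by linarith [hy₀Icc.2, ht.1]) (by linarith)
        rw [huper t] at this
        linarith
    -- bound the potential term
    have hVtot : ∫ t in Set.Ioc (0:ℝ) (2*π), V t = 2*π*μ := by
      rw [hμ]; field_simp
    have hVbound : ∫ t in Set.Ioc (0:ℝ) (2*π), V t * u t ^ 2 ≤ 2*π*μ*(1 + I) := by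
      calc ∫ t in Set.Ioc (0:ℝ) (2*π), V t * u t ^ 2
          ≤ ∫ t in Set.Ioc (0:ℝ) (2*π), V t * (1 + I) := by
            refine setIntegral_mono_on hVu2 (hVint.mul_const (1 + I))
              measurableSet_Ioc (fun t ht => ?_)
            exact mul_le_mul_of_nonneg_left (hsup t ht) (hVnn t)
        _ = 2*π*μ*(1 + I) := by rw [integral_mul_const, hVtot]
    -- the value of r
    have hr' : 2*π*r = G2 - ∫ t in Set.Ioc (0:ℝ) (2*π), V t * u t ^ 2 := by
      rw [hr, integral_sub hg2 hVu2, hG2]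
      field_simp
    -- final optimization
    set s : ℝ := Real.sqrt (G2/(2*π)) with hs
    have hsnn : 0 ≤ s := Real.sqrt_nonneg _
    have hs2 : s^2 = G2/(2*π) := Real.sq_sqrt (by positivity)
    have hG2' : G2 = 2*π*s^2 := by rw [hs2]; field_simp
    have hI2πs : I ≤ 2*π*s := by
      by_contra hcon
      push_neg at hcon
      set ε : ℝ := (I - 2*π*s)/(2*π) with hε
      have hεpos : 0 < ε := by rw [hε]; exact div_pos (by linarith) h2π
      have hb := hIbound (s + ε) (by linarith)
      have hfrac : G2/(2*(s+ε)) ≤ π*s := by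
        rw [hG2', div_le_iff₀ (by linarith)]
        nlinarith [mul_nonneg (mul_nonneg hπ.le hsnn) hεpos.le]
      have hε2 : 2*π*ε = I - 2*π*s := by rw [hε]; field_simp
      linarith [hb, hfrac, hε2, hcon]
    have h1 : μ * I ≤ μ * (2*π*s) := mul_le_mul_of_nonneg_left hI2πs hμnn
    have h2 : 0 ≤ 2*π*(s - π*μ)^2 := by positivity
    have e5 : 2*π*μ*(1+I) = 2*π*μ + 2*π*(μ*I) := by ring
    have e6 : 2*π*(μ*I) ≤ 2*π*(μ*(2*π*s)) := by nlinarith [h1, h2π]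
    have e7 : 2*π*s^2 - 2*π*μ - 2*π*(μ*(2*π*s)) ≤ 2*π*r := by
      rw [hG2'] at hr'
      linarith [hr', hVbound, e5, e6]
    have e8 : 2*π*(-μ - π^2*μ^2) ≤ 2*π*s^2 - 2*π*μ - 2*π*(μ*(2*π*s)) := by nlinarith [h2]
    have e9 : 2*π*(-μ - π^2*μ^2) ≤ 2*π*r := le_trans e8 e7
    exact le_of_mul_le_mul_left e9 h2π
  -- conclusion
  have hbdd : BddBelow {r : ℝ | ∃ u g : ℝ → ℝ, Measurable g ∧
        (∀ x : ℝ, u x = u 0 + ∫ t in (0:ℝ)..x, g t) ∧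
        (∀ x : ℝ, u (x + 2*π) = u x) ∧ (∀ x : ℝ, g (x + 2*π) = g x) ∧
        IntegrableOn (fun y => g y ^ 2) (Set.Ioc 0 (2*π)) ∧
        IntegrableOn (fun y => V y * u y ^ 2) (Set.Ioc 0 (2*π)) ∧
        (1/(2*π)) * ∫ y in Set.Ioc 0 (2*π), u y ^ 2 = 1 ∧
        r = (1/(2*π)) * ∫ y in Set.Ioc 0 (2*π), (g y ^ 2 - V y * u y ^ 2)} :=
    ⟨-μ - π^2 * μ^2, fun r hr => hlb r hr⟩
  constructor
  · rw [hlam]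
    exact le_csInf ⟨-μ, hmem⟩ hlb
  · rw [hlam]
    have := csInf_le hbdd hmem
    linarith
end

section
/- Let d ≥ 1 and q ∈ (2,2^*) (q ∈ (2,∞) if d ≤ 2). Let s with q < s < 2^* (s < ∞ if d ≤ 2), and set θ = s(q−2)/(q(s−2)). Assume the inequality ‖∇u‖₂² + β‖u‖₂² ≥ β‖u‖_s² holds for all u ∈ H¹(S^d) whenever β ≤ d/(s−2). Then for every α > d/(s−2), μ(α) ≥ (d/(s−2))^θ α^{1−θ}, where μ(α) is the optimal constant in ‖∇u‖₂² + α‖u‖₂² ≥ μ(α)‖u‖_q². -/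
open MeasureTheory Metric Real Set Filter
open scoped ENNReal NNReal

noncomputable section

/-- Ambient Euclidean space `ℝ^{d+1}` of the unit sphere `S^d`. -/
abbrev Amb (d : ℕ) := EuclideanSpace ℝ (Fin (d+1))

/-- The uniform probability measure `dσ` on the unit sphere `S^d ⊆ ℝ^{d+1}`. -/
def unifSph (d : ℕ) : Measure (sphere (0 : Amb d) 1) :=
  (((volume : Measure (Amb d)).toSphere) Set.univ)⁻¹ • (volume : Measure (Amb d)).toSphere

/-- Tangential (spherical) gradient of `u` at a point `x` of the unit sphere:
the projection of the ambient gradient onto the tangent space. -/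
def sphGrad {d : ℕ} (u : Amb d → ℝ) (x : Amb d) : Amb d :=
  gradient u x - (inner ℝ (gradient u x) x : ℝ) • x

/-- Dirichlet energy `‖∇u‖₂² = ∫_{S^d} |∇u|² dσ`. -/
def dirichlet (d : ℕ) (u : Amb d → ℝ) : ℝ :=
  ∫ x : sphere (0 : Amb d) 1, ‖sphGrad u (x : Amb d)‖ ^ 2 ∂(unifSph d)

/-- `L^q` (quasi-)norm `‖u‖_q = (∫_{S^d} |u|^q dσ)^{1/q}` w.r.t. the uniform
probability measure on `S^d`. -/
def spNorm (d : ℕ) (q : ℝ) (u : Amb d → ℝ) : ℝ :=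
  (∫ x : sphere (0 : Amb d) 1, |u (x : Amb d)| ^ q ∂(unifSph d)) ^ (1/q)

/-- Optimal constant `μ(α)` in `‖∇u‖₂² + α‖u‖₂² ≥ μ(α)‖u‖_q²` on `H¹(S^d, dσ)`
(infimum of the Rayleigh quotient over smooth nonzero functions). -/
def muFun (d : ℕ) (q : ℝ) (α : ℝ) : ℝ :=
  sInf {m : ℝ | ∃ u : Amb d → ℝ, ContDiff ℝ 1 u ∧ spNorm d q u ≠ 0 ∧
    m = (dirichlet d u + α * spNorm d 2 u ^ 2) / spNorm d q u ^ 2}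

lemma unifSph_prob (d : ℕ) : IsProbabilityMeasure (unifSph d) := by
  constructor
  rw [unifSph, Measure.smul_apply, smul_eq_mul]
  refine ENNReal.inv_mul_cancel ?_ (measure_ne_top _ _)
  rw [Measure.toSphere_apply_univ]
  refine mul_ne_zero ?_ (measure_ball_pos volume 0 one_pos).ne'
  simp [finrank_euclideanSpace_fin]

/-- A continuous function on the sphere is in every `L^p` of the uniform measure. -/
lemma cont_memℒp {d : ℕ} {g : sphere (0 : Amb d) 1 → ℝ} (hg : Continuous g) (p : ℝ≥0∞) :
    MemLp g p (unifSph d) := by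
  have := unifSph_prob d
  obtain ⟨C, hC⟩ : ∃ C, ∀ x, ‖g x‖ ≤ C := by
    obtain ⟨C, hC⟩ := (isCompact_range hg.norm).bddAbove
    exact ⟨C, fun x => hC ⟨x, rfl⟩⟩
  exact (memLp_top_of_bound hg.aestronglyMeasurable C
    (Eventually.of_forall hC)).mono_exponent le_top

lemma cont_abs_rpow {d : ℕ} {u : Amb d → ℝ} (hu : Continuous u) {c : ℝ} (hc : 0 ≤ c) :
    Continuous fun x : sphere (0 : Amb d) 1 => |u (x : Amb d)| ^ c :=
  (Real.continuous_rpow_const hc).comp ((hu.comp continuous_subtype_val).abs)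

lemma spNorm_nonneg (d : ℕ) (p : ℝ) (u : Amb d → ℝ) : 0 ≤ spNorm d p u :=
  Real.rpow_nonneg (integral_nonneg fun x => Real.rpow_nonneg (abs_nonneg _) _) _

lemma integral_abs_rpow_nonneg (d : ℕ) (p : ℝ) (u : Amb d → ℝ) :
    0 ≤ ∫ x : sphere (0 : Amb d) 1, |u (x : Amb d)| ^ p ∂(unifSph d) :=
  integral_nonneg fun x => Real.rpow_nonneg (abs_nonneg _) _

lemma spNorm_sq (d : ℕ) {p : ℝ} (hp : 0 < p) (u : Amb d → ℝ) :
    spNorm d p u ^ 2 =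
      (∫ x : sphere (0 : Amb d) 1, |u (x : Amb d)| ^ p ∂(unifSph d)) ^ (2 / p) := by
  rw [spNorm, ← Real.rpow_natCast _ 2, ← Real.rpow_mul (integral_abs_rpow_nonneg d p u)]
  congr 1
  push_cast
  ring

/-- Hölder interpolation: `‖u‖_q² ≤ (‖u‖_s²)^θ (‖u‖₂²)^{1-θ}`. -/
lemma interp {d : ℕ} {u : Amb d → ℝ} (hu : Continuous u) {q s : ℝ} (hq : 2 < q) (hs : q < s)
    {θ : ℝ} (hθ : θ = s * (q - 2) / (q * (s - 2))) :
    spNorm d q u ^ 2 ≤ (spNorm d s u ^ 2) ^ θ * (spNorm d 2 u ^ 2) ^ (1 - θ) := by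
  have hq0 : (0:ℝ) < q := by linarith
  have hs0 : (0:ℝ) < s := by linarith
  have hs2 : (0:ℝ) < s - 2 := by linarith
  have hq2 : (0:ℝ) < q - 2 := by linarith
  have hsq : (0:ℝ) < s - q := by linarith
  have hf0 : ∀ x : sphere (0 : Amb d) 1, (0:ℝ) ≤ |u (x : Amb d)| := fun x => abs_nonneg _
  set a : ℝ := s * (q - 2) / (s - 2) with ha_def
  set b : ℝ := 2 * (s - q) / (s - 2) with hb_def
  have ha : 0 < a := by positivity
  have hb : 0 < b := by positivity
  have hab : a + b = q := by rw [ha_def, hb_def]; field_simp; ring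
  set p : ℝ := (s - 2) / (q - 2) with hp_def
  set p' : ℝ := (s - 2) / (s - q) with hp'_def
  have hpq : p.HolderConjugate p' := by
    rw [Real.holderConjugate_iff]
    constructor
    · rw [hp_def, lt_div_iff₀ hq2]; linarith
    · rw [hp_def, hp'_def]; field_simp; ring
  have hap : a * p = s := by rw [ha_def, hp_def]; field_simp
  have hbp' : b * p' = 2 := by rw [hb_def, hp'_def]; field_simp
  have hF : MemLp (fun x : sphere (0 : Amb d) 1 => |u (x : Amb d)| ^ a)
      (ENNReal.ofReal p) (unifSph d) := cont_memℒp (cont_abs_rpow hu ha.le) _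
  have hG : MemLp (fun x : sphere (0 : Amb d) 1 => |u (x : Amb d)| ^ b)
      (ENNReal.ofReal p') (unifSph d) := cont_memℒp (cont_abs_rpow hu hb.le) _
  have holder := integral_mul_le_Lp_mul_Lq_of_nonneg hpq
    (Eventually.of_forall fun x => Real.rpow_nonneg (hf0 x) a)
    (Eventually.of_forall fun x => Real.rpow_nonneg (hf0 x) b) hF hG
  have hCeq : (∫ x : sphere (0 : Amb d) 1, |u (x : Amb d)| ^ a * |u (x : Amb d)| ^ b ∂(unifSph d))
      = ∫ x : sphere (0 : Amb d) 1, |u (x : Amb d)| ^ q ∂(unifSph d) := by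
    refine integral_congr_ae (Eventually.of_forall fun x => ?_)
    show |u (x : Amb d)| ^ a * |u (x : Amb d)| ^ b = |u (x : Amb d)| ^ q
    rw [← Real.rpow_add' (hf0 x) (by rw [hab]; positivity), hab]
  have hAeq : (∫ x : sphere (0 : Amb d) 1, (|u (x : Amb d)| ^ a) ^ p ∂(unifSph d))
      = ∫ x : sphere (0 : Amb d) 1, |u (x : Amb d)| ^ s ∂(unifSph d) := by
    refine integral_congr_ae (Eventually.of_forall fun x => ?_)
    show (|u (x : Amb d)| ^ a) ^ p = |u (x : Amb d)| ^ s
    rw [← Real.rpow_mul (hf0 x), hap]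
  have hBeq : (∫ x : sphere (0 : Amb d) 1, (|u (x : Amb d)| ^ b) ^ p' ∂(unifSph d))
      = ∫ x : sphere (0 : Amb d) 1, |u (x : Amb d)| ^ (2:ℝ) ∂(unifSph d) := by
    refine integral_congr_ae (Eventually.of_forall fun x => ?_)
    show (|u (x : Amb d)| ^ b) ^ p' = |u (x : Amb d)| ^ (2:ℝ)
    rw [← Real.rpow_mul (hf0 x), hbp']
  rw [hCeq, hAeq, hBeq] at holder
  have hA0 : 0 ≤ ∫ x : sphere (0 : Amb d) 1, |u (x : Amb d)| ^ s ∂(unifSph d) :=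
    integral_abs_rpow_nonneg d s u
  have hB0 : 0 ≤ ∫ x : sphere (0 : Amb d) 1, |u (x : Amb d)| ^ (2:ℝ) ∂(unifSph d) :=
    integral_abs_rpow_nonneg d 2 u
  have hC0 : 0 ≤ ∫ x : sphere (0 : Amb d) 1, |u (x : Amb d)| ^ q ∂(unifSph d) :=
    integral_abs_rpow_nonneg d q u
  rw [spNorm_sq d hq0 u, spNorm_sq d hs0 u, spNorm_sq d two_pos u]
  have key : ((∫ x : sphere (0 : Amb d) 1, |u (x : Amb d)| ^ s ∂(unifSph d)) ^ ((2:ℝ)/s)) ^ θ *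
      ((∫ x : sphere (0 : Amb d) 1, |u (x : Amb d)| ^ (2:ℝ) ∂(unifSph d)) ^ ((2:ℝ)/2)) ^ (1 - θ) =
      ((∫ x : sphere (0 : Amb d) 1, |u (x : Amb d)| ^ s ∂(unifSph d)) ^ (1/p) *
       (∫ x : sphere (0 : Amb d) 1, |u (x : Amb d)| ^ (2:ℝ) ∂(unifSph d)) ^ (1/p')) ^ ((2:ℝ)/q) := by
    rw [Real.mul_rpow (Real.rpow_nonneg hA0 _) (Real.rpow_nonneg hB0 _),
      ← Real.rpow_mul hA0, ← Real.rpow_mul hB0, ← Real.rpow_mul hA0, ← Real.rpow_mul hB0]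
    have e1 : (2:ℝ)/s * θ = 1/p * (2/q) := by
      rw [hθ, hp_def]; field_simp
    have e2 : (2:ℝ)/2 * (1 - θ) = 1/p' * (2/q) := by
      rw [hθ, hp'_def]; field_simp; ring
    rw [e1, e2]
  rw [key]
  exact Real.rpow_le_rpow hC0 holder (by positivity)

/-- Subcritical lower bound: if the inequality `‖∇u‖₂² + β‖u‖₂² ≥ β‖u‖_s²` holds for all
`β ≤ d/(s−2)`, then for every `α > d/(s−2)`, `μ(α) ≥ (d/(s−2))^θ α^{1−θ}` with
`θ = s(q−2)/(q(s−2))`. -/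
theorem muFun_lower_bound_subcritical (d : ℕ) (hd : 1 ≤ d) (q s : ℝ) (hq : 2 < q)
    (hqs : 3 ≤ d → q < 2 * d / (d - 2)) (hs : q < s) (hss : 3 ≤ d → s < 2 * d / (d - 2))
    (θ : ℝ) (hθ : θ = s * (q - 2) / (q * (s - 2)))
    (hyp : ∀ β : ℝ, 0 < β → β ≤ d / (s - 2) → ∀ u : Amb d → ℝ, ContDiff ℝ 1 u →
      β * spNorm d s u ^ 2 ≤ dirichlet d u + β * spNorm d 2 u ^ 2) :
    ∀ α : ℝ, d / (s - 2) < α → (d / (s - 2)) ^ θ * α ^ (1 - θ) ≤ muFun d q α := by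
  intro α hα
  have := unifSph_prob d
  have hs2 : (0:ℝ) < s - 2 := by linarith
  have hd0 : (0:ℝ) < d := by exact_mod_cast hd
  set β : ℝ := d / (s - 2) with hβ_def
  have hβ : 0 < β := div_pos hd0 hs2
  have hα0 : 0 < α := hβ.trans hα
  have hq2' : (0:ℝ) < q - 2 := by linarith
  have hθ0 : 0 < θ := by
    rw [hθ]; exact div_pos (by nlinarith) (by nlinarith)
  have hθ1 : θ < 1 := by
    rw [hθ, div_lt_one (by positivity)]; nlinarith
  refine le_csInf ⟨(dirichlet d (fun _ => 1) + α * spNorm d 2 (fun _ => 1) ^ 2) /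
      spNorm d q (fun _ => 1) ^ 2, (fun _ => 1), contDiff_const, ?_, rfl⟩ ?_
  · rw [spNorm]
    have : (∫ x : sphere (0 : Amb d) 1, |(1:ℝ)| ^ q ∂(unifSph d)) = 1 := by
      simp [Real.one_rpow]
    rw [this, Real.one_rpow]
    norm_num
  · rintro m ⟨u, hu, hune, rfl⟩
    have hQ2 : 0 < spNorm d q u ^ 2 :=
      lt_of_le_of_ne (sq_nonneg _) (fun h => hune (by nlinarith [spNorm_nonneg d q u]))
    rw [le_div_iff₀ hQ2]
    have hD : 0 ≤ dirichlet d u :=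
      integral_nonneg fun x => by positivity
    have hT2 : 0 ≤ spNorm d 2 u ^ 2 := sq_nonneg _
    have hS2 : 0 ≤ spNorm d s u ^ 2 := sq_nonneg _
    set E : ℝ := dirichlet d u + α * spNorm d 2 u ^ 2 with hE_def
    have hE0 : 0 ≤ E := by positivity
    have h1 : β * spNorm d s u ^ 2 ≤ E := by
      have := hyp β hβ le_rfl u hu
      have : β * spNorm d 2 u ^ 2 ≤ α * spNorm d 2 u ^ 2 :=
        mul_le_mul_of_nonneg_right hα.le hT2
      nlinarith [hyp β hβ le_rfl u hu]
    have h2 : α * spNorm d 2 u ^ 2 ≤ E := by rw [hE_def]; linarith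
    calc β ^ θ * α ^ (1 - θ) * spNorm d q u ^ 2
        ≤ β ^ θ * α ^ (1 - θ) * ((spNorm d s u ^ 2) ^ θ * (spNorm d 2 u ^ 2) ^ (1 - θ)) := by
          refine mul_le_mul_of_nonneg_left (interp hu.continuous hq hs hθ) (by positivity)
      _ = (β * spNorm d s u ^ 2) ^ θ * (α * spNorm d 2 u ^ 2) ^ (1 - θ) := by
          rw [Real.mul_rpow hβ.le hS2, Real.mul_rpow hα0.le hT2]; ring
      _ ≤ E ^ θ * E ^ (1 - θ) := by
          refine mul_le_mul (Real.rpow_le_rpow (by positivity) h1 hθ0.le)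
            (Real.rpow_le_rpow (by positivity) h2 (by linarith))
            (Real.rpow_nonneg (by positivity) _) (Real.rpow_nonneg hE0 _)
      _ = E := by
          rw [← Real.rpow_add' hE0 (by norm_num)]
          norm_num

end
end

section
/- Let d ≥ 1, 2 < q < 2^*, p = q/(q−2), and assume the interpolation inequality ‖∇u‖₂² + α‖u‖₂² ≥ μ(α)‖u‖_q² holds on H¹(S^d,dσ) with μ(α) > 0. Then combining it with the logarithmic Hölder inequality gives: ∫_{S^d}|u|² log(|u|²/‖u‖₂²) dσ + p log(μ(α)/α)·‖u‖₂² ≤ p‖u‖₂² log(1 + ‖∇u‖₂²/(α‖u‖₂²)) for all u ∈ H¹(S^d), u ≠ 0. -/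
open MeasureTheory Metric Real Set Filter

noncomputable section

instance unifSph_finite (d : ℕ) : IsFiniteMeasure (unifSph d) := by
  constructor
  rw [unifSph, Measure.smul_apply, smul_eq_mul]
  exact lt_of_le_of_lt (ENNReal.inv_mul_le_one _) ENNReal.one_lt_top

lemma key_ptwise (q I2 lam : ℝ) (hq : 2 < q) (hI2 : 0 < I2) (hlam : 0 < lam) (t : ℝ) :
    t ^ 2 * Real.log (t ^ 2 / I2) ≤
      (2 / (q - 2) / lam ^ ((q - 2) / 2)) * |t| ^ q
        + (Real.log (lam / I2) - 2 / (q - 2)) * t ^ 2 := by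
  have hq2 : (0:ℝ) < q - 2 := by linarith
  have hq2' : q - 2 ≠ 0 := ne_of_gt hq2
  have hlε : lam ^ ((q - 2) / 2) ≠ 0 := ne_of_gt (Real.rpow_pos_of_pos hlam _)
  rcases eq_or_ne t 0 with rfl | ht
  · simp [Real.zero_rpow (by positivity : q ≠ 0)]
  · have ht2 : (0:ℝ) < t ^ 2 := by positivity
    have hx : (0:ℝ) < t ^ 2 / lam := by positivity
    have hA : (t ^ 2 : ℝ) ^ ((q - 2) / 2) = |t| ^ (q - 2) := by
      rw [← sq_abs, ← Real.rpow_natCast |t| 2, ← Real.rpow_mul (abs_nonneg t)]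
      congr 1
      push_cast
      ring
    have hB : t ^ 2 * |t| ^ (q - 2) = |t| ^ q := by
      rw [← sq_abs, ← Real.rpow_natCast |t| 2, ← Real.rpow_add (abs_pos.2 ht)]
      congr 1
      push_cast
      ring
    have h1 : ((q - 2) / 2) * Real.log (t ^ 2 / lam) ≤ (t ^ 2 / lam) ^ ((q - 2) / 2) - 1 := by
      calc ((q - 2) / 2) * Real.log (t ^ 2 / lam)
          = Real.log ((t ^ 2 / lam) ^ ((q - 2) / 2)) := (Real.log_rpow hx _).symm
        _ ≤ _ := Real.log_le_sub_one_of_pos (Real.rpow_pos_of_pos hx _)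
    have h2 : (t ^ 2 / lam) ^ ((q - 2) / 2) = |t| ^ (q - 2) / lam ^ ((q - 2) / 2) := by
      rw [Real.div_rpow ht2.le hlam.le, hA]
    have hlog_split : Real.log (t ^ 2 / I2) = Real.log (t ^ 2 / lam) + Real.log (lam / I2) := by
      rw [Real.log_div (ne_of_gt ht2) (ne_of_gt hI2), Real.log_div (ne_of_gt ht2) (ne_of_gt hlam),
        Real.log_div (ne_of_gt hlam) (ne_of_gt hI2)]
      ring
    have hstep : t ^ 2 * Real.log (t ^ 2 / lam)
        ≤ (2 / (q - 2)) * (|t| ^ q / lam ^ ((q - 2) / 2)) - (2 / (q - 2)) * t ^ 2 := by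
      calc t ^ 2 * Real.log (t ^ 2 / lam)
          = (2 / (q - 2)) * t ^ 2 * (((q - 2) / 2) * Real.log (t ^ 2 / lam)) := by
            field_simp
        _ ≤ (2 / (q - 2)) * t ^ 2 * ((t ^ 2 / lam) ^ ((q - 2) / 2) - 1) :=
            mul_le_mul_of_nonneg_left h1 (by positivity)
        _ = (2 / (q - 2)) * (|t| ^ q / lam ^ ((q - 2) / 2)) - (2 / (q - 2)) * t ^ 2 := by
            rw [h2, ← hB]
            field_simp
    calc t ^ 2 * Real.log (t ^ 2 / I2)
        = t ^ 2 * Real.log (t ^ 2 / lam) + Real.log (lam / I2) * t ^ 2 := by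
          rw [hlog_split]; ring
      _ ≤ ((2 / (q - 2)) * (|t| ^ q / lam ^ ((q - 2) / 2)) - (2 / (q - 2)) * t ^ 2)
            + Real.log (lam / I2) * t ^ 2 := by linarith
      _ = (2 / (q - 2) / lam ^ ((q - 2) / 2)) * |t| ^ q
            + (Real.log (lam / I2) - 2 / (q - 2)) * t ^ 2 := by ring

/-- Combining the interpolation inequality (with constant `m = μ(α) > 0`) with the
logarithmic Hölder inequality:
`∫|u|² log(|u|²/‖u‖₂²) dσ + p log(μ(α)/α) ‖u‖₂² ≤ p ‖u‖₂² log(1 + ‖∇u‖₂²/(α‖u‖₂²))`. -/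
theorem log_sobolev_from_interpolation (d : ℕ) (hd : 1 ≤ d) (q p α m : ℝ)
    (hq : 2 < q) (hqs : 3 ≤ d → q < 2 * d / (d - 2)) (hp : p = q / (q - 2))
    (hα : 0 < α) (hm : 0 < m)
    (hint : ∀ u : Amb d → ℝ, ContDiff ℝ 1 u →
      m * spNorm d q u ^ 2 ≤ dirichlet d u + α * spNorm d 2 u ^ 2) :
    ∀ u : Amb d → ℝ, ContDiff ℝ 1 u → spNorm d 2 u ≠ 0 →
      (∫ x : sphere (0 : Amb d) 1,
          u (x : Amb d) ^ 2 * Real.log (u (x : Amb d) ^ 2 / spNorm d 2 u ^ 2)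
          ∂(unifSph d))
        + p * Real.log (m / α) * spNorm d 2 u ^ 2
      ≤ p * spNorm d 2 u ^ 2 *
          Real.log (1 + dirichlet d u / (α * spNorm d 2 u ^ 2)) := by
  intro u hu hN2
  have hq2 : (0:ℝ) < q - 2 := by linarith
  have hq2' : q - 2 ≠ 0 := ne_of_gt hq2
  have hq0 : (0:ℝ) < q := by linarith
  have hcu : Continuous fun x : sphere (0 : Amb d) 1 => u (x : Amb d) :=
    hu.continuous.comp continuous_subtype_val
  have hint_cont : ∀ f : sphere (0 : Amb d) 1 → ℝ, Continuous f → Integrable f (unifSph d) :=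
    fun f hf => hf.integrable_of_hasCompactSupport (HasCompactSupport.of_compactSpace f)
  -- squared L² norm
  have h2 : spNorm d 2 u ^ 2 = ∫ x : sphere (0 : Amb d) 1, u (x : Amb d) ^ 2 ∂(unifSph d) := by
    unfold spNorm
    have hI : ∀ x : sphere (0 : Amb d) 1, |u (x : Amb d)| ^ (2:ℝ) = u (x : Amb d) ^ 2 :=
      fun x => by
        rw [show (2:ℝ) = ((2:ℕ):ℝ) by norm_num, Real.rpow_natCast, sq_abs]
    simp only [hI]
    have hA0 : 0 ≤ ∫ x : sphere (0 : Amb d) 1, u (x : Amb d) ^ 2 ∂(unifSph d) :=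
      integral_nonneg fun x => sq_nonneg _
    rw [← Real.rpow_natCast (_ ^ (1/(2:ℝ))) 2, ← Real.rpow_mul hA0]
    norm_num
  set I2 : ℝ := ∫ x : sphere (0 : Amb d) 1, u (x : Amb d) ^ 2 ∂(unifSph d) with hI2def
  have hcsq : Continuous fun x : sphere (0 : Amb d) 1 => u (x : Amb d) ^ 2 := hcu.pow 2
  have int2 : Integrable (fun x : sphere (0 : Amb d) 1 => u (x : Amb d) ^ 2) (unifSph d) :=
    hint_cont _ hcsq
  have hI2pos : 0 < I2 := by
    rcases (show (0:ℝ) ≤ I2 from integral_nonneg fun x => sq_nonneg _).lt_or_eq with h | h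
    · exact h
    · exfalso
      apply hN2
      have h0 : spNorm d 2 u ^ 2 = 0 := h2.trans (hI2def.trans h.symm)
      exact pow_eq_zero_iff (two_ne_zero) |>.mp h0
  set Iq : ℝ := ∫ x : sphere (0 : Amb d) 1, |u (x : Amb d)| ^ q ∂(unifSph d) with hIqdef
  have hcq : Continuous fun x : sphere (0 : Amb d) 1 => |u (x : Amb d)| ^ q :=
    hcu.abs.rpow_const fun x => Or.inr hq0.le
  have intq : Integrable (fun x : sphere (0 : Amb d) 1 => |u (x : Amb d)| ^ q) (unifSph d) :=
    hint_cont _ hcq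
  have hIq0 : 0 ≤ Iq := integral_nonneg fun x => Real.rpow_nonneg (abs_nonneg _) _
  have hIqpos : 0 < Iq := by
    rcases hIq0.lt_or_eq with h | h
    · exact h
    · exfalso
      have hz := (integral_eq_zero_iff_of_nonneg
        (fun x : sphere (0 : Amb d) 1 => Real.rpow_nonneg (abs_nonneg (u x)) q) intq).mp h.symm
      have hz2 : (fun x : sphere (0 : Amb d) 1 => u (x : Amb d) ^ 2) =ᵐ[unifSph d] 0 := by
        filter_upwards [hz] with x hx
        have h0 : |u (x : Amb d)| = 0 :=
          (Real.rpow_eq_zero (abs_nonneg _) (ne_of_gt hq0)).mp hx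
        simp [abs_eq_zero.mp h0]
      have : I2 = 0 := by
        rw [hI2def, integral_congr_ae hz2]
        simp
      linarith
  have hNq : spNorm d q u ^ 2 = Iq ^ ((2:ℝ)/q) := by
    unfold spNorm
    rw [← hIqdef, ← Real.rpow_natCast (Iq ^ (1/q)) 2, ← Real.rpow_mul hIq0]
    congr 1
    push_cast
    ring
  have hNqpos : 0 < Iq ^ ((2:ℝ)/q) := Real.rpow_pos_of_pos hIqpos _
  -- the optimizing constant lam
  set lam : ℝ := (Iq / I2) ^ ((2:ℝ)/(q-2)) with hlamdef
  have hlam : 0 < lam := Real.rpow_pos_of_pos (div_pos hIqpos hI2pos) _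
  have hlame : lam ^ ((q-2)/2) = Iq / I2 := by
    rw [hlamdef, ← Real.rpow_mul (div_pos hIqpos hI2pos).le,
      show (2:ℝ)/(q-2) * ((q-2)/2) = 1 by field_simp, Real.rpow_one]
  -- pointwise bound and integration
  have hpt : ∀ x : sphere (0 : Amb d) 1,
      u (x : Amb d) ^ 2 * Real.log (u (x : Amb d) ^ 2 / I2)
        ≤ (2/(q-2)/lam ^ ((q-2)/2)) * |u (x : Amb d)| ^ q
          + (Real.log (lam / I2) - 2/(q-2)) * u (x : Amb d) ^ 2 :=
    fun x => key_ptwise q I2 lam hq hI2pos hlam (u x)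
  have hcL : Continuous fun x : sphere (0 : Amb d) 1 =>
      u (x : Amb d) ^ 2 * Real.log (u (x : Amb d) ^ 2 / I2) := by
    have h1 : Continuous fun t : ℝ => t ^ 2 * Real.log (t ^ 2 / I2) := by
      have hc2 : Continuous fun t : ℝ => (t ^ 2) * Real.log (t ^ 2) - Real.log I2 * t ^ 2 :=
        (Real.continuous_mul_log.comp (continuous_pow 2)).sub
          (continuous_const.mul (continuous_pow 2))
      refine hc2.congr fun t => ?_
      rcases eq_or_ne t 0 with rfl | ht
      · simp
      · rw [Real.log_div (by positivity) (ne_of_gt hI2pos)]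
        ring
    exact h1.comp hcu
  have intL : Integrable (fun x : sphere (0 : Amb d) 1 =>
      u (x : Amb d) ^ 2 * Real.log (u (x : Amb d) ^ 2 / I2)) (unifSph d) := hint_cont _ hcL
  have hkey : (∫ x : sphere (0 : Amb d) 1,
      u (x : Amb d) ^ 2 * Real.log (u (x : Amb d) ^ 2 / I2) ∂(unifSph d))
      ≤ Real.log (lam / I2) * I2 := by
    have hmono : (∫ x : sphere (0 : Amb d) 1,
        u (x : Amb d) ^ 2 * Real.log (u (x : Amb d) ^ 2 / I2) ∂(unifSph d))
        ≤ ∫ x : sphere (0 : Amb d) 1,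
            ((2/(q-2)/lam ^ ((q-2)/2)) * |u (x : Amb d)| ^ q
              + (Real.log (lam / I2) - 2/(q-2)) * u (x : Amb d) ^ 2) ∂(unifSph d) :=
      integral_mono intL ((intq.const_mul _).add (int2.const_mul _)) hpt
    rw [integral_add (intq.const_mul _) (int2.const_mul _), integral_const_mul _,
      integral_const_mul _, ← hIqdef, ← hI2def] at hmono
    have hRHS : (2/(q-2)/lam ^ ((q-2)/2)) * Iq + (Real.log (lam / I2) - 2/(q-2)) * I2
        = Real.log (lam / I2) * I2 := by
      rw [hlame]
      field_simp
      ring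
    linarith [hmono, hRHS.le, hRHS.ge]
  -- identify log(lam/I2) with p * log(Nq²/I2)
  have hloglam : Real.log (lam / I2) = p * Real.log (Iq ^ ((2:ℝ)/q) / I2) := by
    rw [Real.log_div (ne_of_gt hlam) (ne_of_gt hI2pos),
      Real.log_div (ne_of_gt hNqpos) (ne_of_gt hI2pos),
      hlamdef, Real.log_rpow (div_pos hIqpos hI2pos), Real.log_rpow hIqpos,
      Real.log_div (ne_of_gt hIqpos) (ne_of_gt hI2pos), hp]
    field_simp
    ring
  -- interpolation step
  have hD : 0 ≤ dirichlet d u := integral_nonneg fun x => sq_nonneg _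
  have hintu := hint u hu
  rw [h2, hNq] at hintu
  have hB1 : Iq ^ ((2:ℝ)/q) / I2 ≤ (dirichlet d u + α * I2) / (m * I2) := by
    rw [div_le_div_iff₀ hI2pos (by positivity)]
    nlinarith [mul_le_mul_of_nonneg_right hintu hI2pos.le]
  have hB2 : Real.log (Iq ^ ((2:ℝ)/q) / I2)
      ≤ Real.log ((dirichlet d u + α * I2) / (m * I2)) :=
    Real.log_le_log (by positivity) hB1
  have hone : 0 < 1 + dirichlet d u / (α * I2) := by
    have := div_nonneg hD (by positivity : (0:ℝ) ≤ α * I2)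
    linarith
  have hsplit : Real.log ((dirichlet d u + α * I2) / (m * I2))
      = -Real.log (m / α) + Real.log (1 + dirichlet d u / (α * I2)) := by
    have h1 : (dirichlet d u + α * I2) / (m * I2)
        = (α / m) * (1 + dirichlet d u / (α * I2)) := by
      field_simp
      ring
    rw [h1, Real.log_mul (by positivity) (ne_of_gt hone),
      Real.log_div (ne_of_gt hα) (ne_of_gt hm), Real.log_div (ne_of_gt hm) (ne_of_gt hα)]
    ring
  have hppos : 0 < p := hp ▸ div_pos hq0 hq2
  have hfin : p * I2 * Real.log (Iq ^ ((2:ℝ)/q) / I2)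
      ≤ p * I2 * (-Real.log (m / α) + Real.log (1 + dirichlet d u / (α * I2))) := by
    rw [← hsplit]
    exact mul_le_mul_of_nonneg_left hB2 (by positivity)
  rw [hloglam] at hkey
  rw [h2]
  nlinarith [hkey, hfin]

end
end
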